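/- arXiv:1803.06801 — 5 statements merged into one kernel-verified Lean document; each statement's English description precedes it below -/
import Mathlib

section
/- Let the setup be as described and fix p₀ ∈ P. Then the functional L is bounded from below on the set C̃₁ := { u : cl(P) → ℝ convex | ∫_{∂P} α u dσ = 1 and inf_P u = u(p₀) = 0 }; that is, there exists a real constant B such that L(u) ≥ B for every u ∈ C̃₁. -/
/-!
The radial projection `π` from `p₀` maps `P \ {p₀}` to `∂P`. The preimage of a boundary piece
of diameter `δ` lies in a cone with apex `p₀` and width `2δ`, whose area is `O(δ)`, so the image
of Lebesgue measure on `P` under `π` is dominated by `C • μH[1]` on `∂P`. A convex `u` attaining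
its minimum `0` at `p₀` is nondecreasing along rays from `p₀`, hence `u ≤ u ∘ π` on `P` and
`∫_P u ≤ C ∫_∂P u ≤ C / inf α`. As `A β` is bounded, the interior term of `L u` is bounded,
while its boundary term is `1`.
-/

open MeasureTheory Set Metric Bornology
open scoped ENNReal

section Cone

variable {n : ℕ}

def coordBox (n : ℕ) (a b r : ℝ) : Set (EuclideanSpace ℝ (Fin (n + 1))) :=
  (MeasurableEquiv.toLp 2 (Fin (n + 1) → ℝ)).symm ⁻¹'
    univ.pi (Fin.cons (Icc a b) fun _ => Icc (-r) r)

lemma mem_coordBox {a b r : ℝ} {w : EuclideanSpace ℝ (Fin (n + 1))} :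
    w ∈ coordBox n a b r ↔ w 0 ∈ Icc a b ∧ ∀ i : Fin n, w i.succ ∈ Icc (-r) r := by
  simp [coordBox, Fin.forall_fin_succ]

lemma measurableSet_coordBox (a b r : ℝ) : MeasurableSet (coordBox n a b r) :=
  (MeasurableEquiv.toLp 2 _).symm.measurable <|
    .univ_pi <| Fin.cases measurableSet_Icc fun _ => measurableSet_Icc

lemma volume_coordBox (a b r : ℝ) :
    volume (coordBox n a b r) = ENNReal.ofReal (b - a) * ENNReal.ofReal (2 * r) ^ n := by
  rw [coordBox, (EuclideanSpace.volume_preserving_symm_measurableEquiv_toLp _).measure_preimage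
    (MeasurableSet.univ_pi <| Fin.cases measurableSet_Icc fun _ =>
      measurableSet_Icc).nullMeasurableSet, volume_pi_pi, Fin.prod_univ_succ]
  simp [Real.volume_Icc, two_mul]

lemma exists_linearIsometryEquiv_apply_eq_single_norm (q : EuclideanSpace ℝ (Fin (n + 1))) :
    ∃ ρ : EuclideanSpace ℝ (Fin (n + 1)) ≃ₗᵢ[ℝ] EuclideanSpace ℝ (Fin (n + 1)),
      ρ q = EuclideanSpace.single 0 ‖q‖ :=
  ⟨_, Submodule.reflection_sub (by simp)⟩

/-- After an isometry sending `x₀ - p₀` to the first axis, the cone lies in the box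
`[-δ, L + δ] × [-δ, δ]ⁿ`, where `L = dist x₀ p₀` and `δ = diam F`. -/
theorem volume_biUnion_segment_le {p₀ x₀ : EuclideanSpace ℝ (Fin (n + 1))}
    {F : Set (EuclideanSpace ℝ (Fin (n + 1)))} (hF : IsBounded F) (hx₀ : x₀ ∈ F) :
    volume (⋃ z ∈ F, segment ℝ p₀ z) ≤
      ENNReal.ofReal (dist x₀ p₀ + 2 * diam F) * ENNReal.ofReal (2 * diam F) ^ n := by
  set δ := diam F
  set L := dist x₀ p₀
  obtain ⟨ρ, hρ⟩ := exists_linearIsometryEquiv_apply_eq_single_norm (x₀ - p₀)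
  rw [← dist_eq_norm] at hρ
  have hmp : MeasurePreserving (fun y => ρ (y - p₀)) :=
    ρ.measurePreserving.comp (measurePreserving_sub_right volume p₀)
  have hsub : (⋃ z ∈ F, segment ℝ p₀ z) ⊆
      (fun y => ρ (y - p₀)) ⁻¹' coordBox n (-δ) (L + δ) δ := by
    simp only [iUnion_subset_iff]
    rintro z hz _ ⟨a, b, ha, hb, hab, rfl⟩
    set w := ρ (z - x₀)
    have hw : ∀ i, |w i| ≤ δ := fun i => (PiLp.norm_apply_le w i).trans <| by
      simpa [w, ← dist_eq_norm] using dist_le_diam_of_mem hF hz hx₀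
    have hy : ρ (a • p₀ + b • z - p₀) = b • (EuclideanSpace.single 0 L + w) := by
      rw [← hρ, ← map_add, ← map_smul, show a = 1 - b by linarith]
      congr 1
      module
    have hb1 : b ≤ 1 := by linarith
    have hL : 0 ≤ L := dist_nonneg
    simp only [mem_preimage, hy, mem_coordBox, mem_Icc, PiLp.smul_apply, PiLp.add_apply,
      PiLp.single_apply, smul_eq_mul]
    refine ⟨?_, fun i => ?_⟩
    · have := abs_le.1 (hw 0)
      rw [if_pos trivial]
      constructor <;> nlinarith
    · have := abs_le.1 (hw i.succ)
      rw [if_neg (Fin.succ_ne_zero i), zero_add]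
      constructor <;> nlinarith
  calc volume (⋃ z ∈ F, segment ℝ p₀ z)
      ≤ volume ((fun y => ρ (y - p₀)) ⁻¹' coordBox n (-δ) (L + δ) δ) := measure_mono hsub
    _ = _ := by
      rw [hmp.measure_preimage (measurableSet_coordBox _ _ _).nullMeasurableSet, volume_coordBox]
      ring_nf

theorem volume_biUnion_segment_le_of_subset {p₀ : EuclideanSpace ℝ (Fin (n + 1))}
    {K F : Set (EuclideanSpace ℝ (Fin (n + 1)))} (hK : IsBounded K) (hp₀ : p₀ ∈ K)
    (hFK : F ⊆ K) :
    volume (⋃ z ∈ F, segment ℝ p₀ z) ≤ ENNReal.ofReal (3 * diam K) * (2 * ediam F) ^ n := by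
  obtain rfl | ⟨x₀, hx₀⟩ := F.eq_empty_or_nonempty
  · simp
  have hF := hK.subset hFK
  have hdist : dist x₀ p₀ ≤ diam K := dist_le_diam_of_mem hK (hFK hx₀) hp₀
  have hdiam : diam F ≤ diam K := diam_mono hFK hK
  refine (volume_biUnion_segment_le hF hx₀).trans
    (mul_le_mul' (ENNReal.ofReal_le_ofReal (by linarith)) ?_)
  rw [ENNReal.ofReal_mul zero_le_two, ENNReal.ofReal_ofNat, diam,
    ENNReal.ofReal_toReal hF.ediam_ne_top]

end Cone

lemma MeasureTheory.Measure.le_smul_hausdorffMeasure {X : Type*} [EMetricSpace X]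
    [MeasurableSpace X] [BorelSpace X] {μ : Measure X} {c : ℝ≥0∞} {d : ℝ} (hc : c ≠ ∞)
    (h : ∀ s, μ s ≤ c * ediam s ^ d) : μ ≤ c • μH[d] := by
  rcases eq_or_ne c 0 with rfl | hc0
  · simp only [zero_mul, nonpos_iff_eq_zero] at h
    simpa [Measure.le_iff'] using fun s => (h s).le
  · calc μ ≤ Measure.mkMetric (c • fun r => r ^ d) :=
          Measure.le_mkMetric _ μ 1 one_pos fun s _ => h s
      _ ≤ c • μH[d] :=
          Measure.mkMetric_mono_smul hc hc0 (Filter.Eventually.of_forall fun _ => le_rfl)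

lemma preimage_const_add_mem_nhds_zero {G : Type*} [TopologicalSpace G] [AddGroup G]
    [ContinuousAdd G] {s : Set G} {a : G} (hs : IsOpen s) (ha : a ∈ s) :
    (a + ·) ⁻¹' s ∈ nhds (0 : G) :=
  (hs.preimage (continuous_const_add a)).mem_nhds (by simpa)

section RadialProjection

variable {E : Type*} [NormedAddCommGroup E] [NormedSpace ℝ E] {P : Set E} {p₀ x : E}

noncomputable def radialGauge (P : Set E) (p₀ x : E) : ℝ := gauge ((p₀ + ·) ⁻¹' P) (x - p₀)

noncomputable def radialProj (P : Set E) (p₀ x : E) : E :=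
  p₀ + (radialGauge P p₀ x)⁻¹ • (x - p₀)

lemma radialGauge_lt_one (hPo : IsOpen P) (hx : x ∈ P) : radialGauge P p₀ x < 1 :=
  gauge_lt_one_of_mem_of_isOpen (hPo.preimage (continuous_const_add p₀)) (by simpa)

lemma radialGauge_pos (hPo : IsOpen P) (hPb : IsBounded P) (hp₀ : p₀ ∈ P) (hx : x ≠ p₀) :
    0 < radialGauge P p₀ x := by
  refine (gauge_pos (absorbent_nhds_zero (preimage_const_add_mem_nhds_zero hPo hp₀))
    (NormedSpace.isVonNBounded_of_isBounded _ ?_)).2 (sub_ne_zero.2 hx)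
  exact (hPb.vadd (-p₀)).subset fun y hy => ⟨p₀ + y, hy, by simp⟩

lemma continuous_radialGauge (hPc : Convex ℝ P) (hPo : IsOpen P) (hp₀ : p₀ ∈ P) :
    Continuous (radialGauge P p₀) :=
  (continuous_gauge (hPc.translate_preimage_right p₀)
    (preimage_const_add_mem_nhds_zero hPo hp₀)).comp (continuous_id.sub continuous_const)

lemma radialGauge_radialProj (hx : 0 < radialGauge P p₀ x) :
    radialGauge P p₀ (radialProj P p₀ x) = 1 := by
  rw [radialGauge, radialProj, add_sub_cancel_left, gauge_smul_of_nonneg (inv_nonneg.2 hx.le),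
    smul_eq_mul, ← radialGauge, inv_mul_cancel₀ hx.ne']

lemma sub_smul_add_smul_radialProj (hx : radialGauge P p₀ x ≠ 0) :
    (1 - radialGauge P p₀ x) • p₀ + radialGauge P p₀ x • radialProj P p₀ x = x := by
  rw [radialProj, smul_add, smul_smul, mul_inv_cancel₀ hx, one_smul]
  module

lemma radialProj_mem_frontier (hPc : Convex ℝ P) (hPo : IsOpen P) (hp₀ : p₀ ∈ P)
    (hx : 0 < radialGauge P p₀ x) : radialProj P p₀ x ∈ frontier P := by
  have hg := radialGauge_radialProj hx
  rw [hPo.frontier_eq]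
  refine ⟨?_, fun hmem => (radialGauge_lt_one hPo hmem).ne hg⟩
  have := (gauge_le_one_iff_mem_closure (hPc.translate_preimage_right p₀)
    (preimage_const_add_mem_nhds_zero hPo hp₀)).1 hg.le
  simpa using (continuous_const_add p₀).closure_preimage_subset P this

lemma continuousOn_radialProj (hPc : Convex ℝ P) (hPo : IsOpen P) (hPb : IsBounded P)
    (hp₀ : p₀ ∈ P) : ContinuousOn (radialProj P p₀) {p₀}ᶜ :=
  continuousOn_const.add <|
    ((continuous_radialGauge hPc hPo hp₀).continuousOn.inv₀ fun _ hx =>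
      (radialGauge_pos hPo hPb hp₀ hx).ne').smul (continuous_id.sub continuous_const).continuousOn

lemma mem_segment_radialProj (hPo : IsOpen P) (hPb : IsBounded P) (hp₀ : p₀ ∈ P)
    (hx : x ∈ P) (hne : x ≠ p₀) : x ∈ segment ℝ p₀ (radialProj P p₀ x) :=
  have hg := radialGauge_pos hPo hPb hp₀ hne
  ⟨_, _, sub_nonneg.2 (radialGauge_lt_one hPo hx).le, hg.le, sub_add_cancel _ _,
    sub_smul_add_smul_radialProj hg.ne'⟩

end RadialProjection

section RadialMeasure

variable {n : ℕ} {P : Set (EuclideanSpace ℝ (Fin (n + 1)))} {p₀ : EuclideanSpace ℝ (Fin (n + 1))}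

lemma aemeasurable_radialProj (hPc : Convex ℝ P) (hPo : IsOpen P) (hPb : IsBounded P)
    (hp₀ : p₀ ∈ P) : AEMeasurable (radialProj P p₀) (volume.restrict (P \ {p₀})) :=
  ((continuousOn_radialProj hPc hPo hPb hp₀).mono fun _ hx => hx.2).aemeasurable <|
    hPo.measurableSet.diff (measurableSet_singleton p₀)

theorem map_radialProj_le_smul_hausdorffMeasure (hPc : Convex ℝ P) (hPo : IsOpen P)
    (hPb : IsBounded P) (hp₀ : p₀ ∈ P) :
    (volume.restrict (P \ {p₀})).map (radialProj P p₀) ≤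
      (ENNReal.ofReal (3 * diam (closure P)) * 2 ^ n) • (μH[n]).restrict (frontier P) := by
  set c := ENNReal.ofReal (3 * diam (closure P)) * 2 ^ n
  set ν := (volume.restrict (P \ {p₀})).map (radialProj P p₀)
  have hP' : MeasurableSet (P \ {p₀}) := hPo.measurableSet.diff (measurableSet_singleton p₀)
  have hR := aemeasurable_radialProj hPc hPo hPb hp₀
  have hfr : ∀ x ∈ P \ {p₀}, radialProj P p₀ x ∈ frontier P := fun x hx =>
    radialProj_mem_frontier hPc hPo hp₀ (radialGauge_pos hPo hPb hp₀ hx.2)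
  have hν_frontier : ν (frontier P)ᶜ = 0 := by
    rw [Measure.map_apply_of_aemeasurable hR isClosed_frontier.measurableSet.compl,
      Measure.restrict_apply' hP']
    exact measure_mono_null (fun x hx => hx.1 (hfr x hx.2)) measure_empty
  have hν_diam : ∀ s, ν s ≤ c * ediam s ^ (n : ℝ) := fun s => calc
    ν s ≤ ν (closure s) := measure_mono subset_closure
    _ = volume (radialProj P p₀ ⁻¹' closure s ∩ (P \ {p₀})) := by
      rw [Measure.map_apply_of_aemeasurable hR isClosed_closure.measurableSet,
        Measure.restrict_apply' hP']
    _ ≤ volume (⋃ z ∈ closure s ∩ frontier P, segment ℝ p₀ z) := measure_mono fun x hx =>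
      mem_biUnion ⟨hx.1, hfr x hx.2⟩ (mem_segment_radialProj hPo hPb hp₀ hx.2.1 hx.2.2)
    _ ≤ ENNReal.ofReal (3 * diam (closure P)) * (2 * ediam (closure s ∩ frontier P)) ^ n :=
      volume_biUnion_segment_le_of_subset hPb.closure (subset_closure hp₀)
        (inter_subset_right.trans frontier_subset_closure)
    _ ≤ c * ediam s ^ (n : ℝ) := by
      rw [ENNReal.rpow_natCast, mul_pow, mul_assoc, ← ediam_closure s]
      gcongr
      exact inter_subset_left
  calc ν = ν.restrict (frontier P) :=
        (Measure.restrict_eq_self_of_ae_mem (mem_ae_iff.2 hν_frontier)).symm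
    _ ≤ (c • μH[n]).restrict (frontier P) :=
      Measure.restrict_mono subset_rfl <| Measure.le_smul_hausdorffMeasure (by finiteness) hν_diam
    _ = c • (μH[n]).restrict (frontier P) := Measure.restrict_smul _ _ _

theorem lintegral_le_mul_lintegral_frontier (hPc : Convex ℝ P) (hPo : IsOpen P)
    (hPb : IsBounded P) (hp₀ : p₀ ∈ P) {f : EuclideanSpace ℝ (Fin (n + 1)) → ℝ≥0∞}
    (hf : AEMeasurable f ((μH[n]).restrict (frontier P)))
    (hf_le : ∀ x ∈ P, x ≠ p₀ → f x ≤ f (radialProj P p₀ x)) :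
    ∫⁻ x in P, f x ≤
      ENNReal.ofReal (3 * diam (closure P)) * 2 ^ n * ∫⁻ x in frontier P, f x ∂μH[n] := by
  have hν := map_radialProj_le_smul_hausdorffMeasure hPc hPo hPb hp₀
  have hP' : MeasurableSet (P \ {p₀}) := hPo.measurableSet.diff (measurableSet_singleton p₀)
  calc ∫⁻ x in P, f x = ∫⁻ x in P \ {p₀}, f x := by
        rw [Measure.restrict_congr_set (sdiff_null_ae_eq_self (measure_singleton p₀))]
    _ ≤ ∫⁻ x in P \ {p₀}, f (radialProj P p₀ x) :=
        setLIntegral_mono' hP' fun x hx => hf_le x hx.1 hx.2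
    _ = ∫⁻ y, f y ∂(volume.restrict (P \ {p₀})).map (radialProj P p₀) :=
        (lintegral_map' (hf.mono_ac (Measure.absolutelyContinuous_of_le_smul hν))
          (aemeasurable_radialProj hPc hPo hPb hp₀)).symm
    _ ≤ _ := by
        rw [← smul_eq_mul, ← lintegral_smul_measure]
        exact lintegral_mono' hν le_rfl

end RadialMeasure

section ConvexFunction

variable {E : Type*} [NormedAddCommGroup E] [NormedSpace ℝ E] {P : Set E} {p₀ : E} {u : E → ℝ}

lemma ConvexOn.nonneg_of_mem_closure (hu : ConvexOn ℝ (closure P) u) (hPc : Convex ℝ P)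
    (hPo : IsOpen P) (hp₀ : p₀ ∈ P) (hu0 : ∀ x ∈ P, 0 ≤ u x) (hup₀ : u p₀ = 0) {z : E}
    (hz : z ∈ closure P) : 0 ≤ u z := by
  have hmid : (1 / 2 : ℝ) • p₀ + (1 / 2 : ℝ) • z ∈ P := by
    simpa only [hPo.interior_eq] using hPc.combo_interior_closure_mem_interior
      (hPo.interior_eq.symm ▸ hp₀) hz (by norm_num) (by norm_num) (by norm_num)
  have := (hu0 _ hmid).trans <|
    hu.2 (subset_closure hp₀) hz (by norm_num) (by norm_num) (by norm_num)
  rw [hup₀, smul_eq_mul, smul_eq_mul] at this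
  linarith

lemma ConvexOn.le_radialProj (hu : ConvexOn ℝ (closure P) u) (hPc : Convex ℝ P) (hPo : IsOpen P)
    (hPb : IsBounded P) (hp₀ : p₀ ∈ P) (hu0 : ∀ x ∈ P, 0 ≤ u x) (hup₀ : u p₀ = 0)
    {x : E} (hx : x ∈ P) (hne : x ≠ p₀) : u x ≤ u (radialProj P p₀ x) := by
  have hR := frontier_subset_closure <|
    radialProj_mem_frontier hPc hPo hp₀ (radialGauge_pos hPo hPb hp₀ hne)
  calc u x ≤ max (u p₀) (u (radialProj P p₀ x)) :=
        hu.le_on_segment (subset_closure hp₀) hR (mem_segment_radialProj hPo hPb hp₀ hx hne)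
    _ = u (radialProj P p₀ x) := by
        rw [hup₀, max_eq_right (hu.nonneg_of_mem_closure hPc hPo hp₀ hu0 hup₀ hR)]

end ConvexFunction

section Integrals

variable {X : Type*} [MeasurableSpace X] {μ : Measure X} {u : X → ℝ}

lemma aemeasurable_of_integrable_mul {α : X → ℝ} (hα : Measurable α) (hα0 : ∀ᵐ x ∂μ, α x ≠ 0)
    (h : Integrable (fun x => α x * u x) μ) : AEMeasurable u μ :=
  (h.aemeasurable.div hα.aemeasurable).congr <| by
    filter_upwards [hα0] with x hx
    simp [hx]

lemma ofReal_mul_lintegral_le_integral_mul {α : X → ℝ} {c : ℝ} (hc : 0 ≤ c)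
    (hα : ∀ᵐ x ∂μ, c ≤ α x) (hu : ∀ᵐ x ∂μ, 0 ≤ u x) (h : Integrable (fun x => α x * u x) μ) :
    ENNReal.ofReal c * ∫⁻ x, ENNReal.ofReal (u x) ∂μ ≤ ENNReal.ofReal (∫ x, α x * u x ∂μ) := by
  rw [← lintegral_const_mul' _ _ ENNReal.ofReal_ne_top, ofReal_integral_eq_lintegral_ofReal h
    (by filter_upwards [hα, hu] with x hαx hux using mul_nonneg (hc.trans hαx) hux)]
  refine lintegral_mono_ae ?_
  filter_upwards [hα, hu] with x hαx hux
  rw [← ENNReal.ofReal_mul hc]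
  exact ENNReal.ofReal_le_ofReal (mul_le_mul_of_nonneg_right hαx hux)

lemma integral_mul_le_of_lintegral_le {g : X → ℝ} {M : ℝ} {K : ℝ≥0∞} (hM : 0 ≤ M)
    (hg : ∀ᵐ x ∂μ, |g x| ≤ M) (hu : ∀ᵐ x ∂μ, 0 ≤ u x)
    (hK : ∫⁻ x, ENNReal.ofReal (u x) ∂μ ≤ K) (hKtop : K ≠ ∞) :
    ∫ x, g x * u x ∂μ ≤ M * K.toReal := by
  have hbound : ∫⁻ x, ENNReal.ofReal ‖g x * u x‖ ∂μ ≤ ENNReal.ofReal M * K := calc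
    ∫⁻ x, ENNReal.ofReal ‖g x * u x‖ ∂μ ≤ ∫⁻ x, ENNReal.ofReal M * ENNReal.ofReal (u x) ∂μ := by
      refine lintegral_mono_ae ?_
      filter_upwards [hg, hu] with x hgx hux
      rw [← ENNReal.ofReal_mul hM, Real.norm_eq_abs, abs_mul, abs_of_nonneg hux]
      exact ENNReal.ofReal_le_ofReal (mul_le_mul_of_nonneg_right hgx hux)
    _ ≤ ENNReal.ofReal M * K := by
      rw [lintegral_const_mul' _ _ ENNReal.ofReal_ne_top]
      gcongr
  calc ∫ x, g x * u x ∂μ ≤ ‖∫ x, g x * u x ∂μ‖ := Real.le_norm_self _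
    _ ≤ (∫⁻ x, ENNReal.ofReal ‖g x * u x‖ ∂μ).toReal := norm_integral_le_lintegral_norm _
    _ ≤ (ENNReal.ofReal M * K).toReal := ENNReal.toReal_mono (by finiteness) hbound
    _ = M * K.toReal := by rw [ENNReal.toReal_mul, ENNReal.toReal_ofReal hM]

end Integrals

theorem ConvexOn.lintegral_le_of_integral_frontier_eq_one {n : ℕ}
    {P : Set (EuclideanSpace ℝ (Fin (n + 1)))} {p₀ : EuclideanSpace ℝ (Fin (n + 1))}
    {u α : EuclideanSpace ℝ (Fin (n + 1)) → ℝ} {c : ℝ} (hu : ConvexOn ℝ (closure P) u)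
    (hPc : Convex ℝ P) (hPo : IsOpen P) (hPb : IsBounded P) (hp₀ : p₀ ∈ P)
    (hu0 : ∀ x ∈ P, 0 ≤ u x) (hup₀ : u p₀ = 0) (hα_meas : Measurable α) (hc : 0 < c)
    (hα : ∀ x ∈ frontier P, c ≤ α x) (h1 : ∫ x in frontier P, α x * u x ∂μH[n] = 1) :
    ∫⁻ x in P, ENNReal.ofReal (u x) ≤
      ENNReal.ofReal (3 * diam (closure P)) * 2 ^ n * (ENNReal.ofReal c)⁻¹ := by
  have hae {p : _ → Prop} (h : ∀ x ∈ frontier P, p x) : ∀ᵐ x ∂(μH[n].restrict (frontier P)), p x :=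
    ae_restrict_of_forall_mem isClosed_frontier.measurableSet h
  have hint : Integrable (fun x => α x * u x) (μH[n].restrict (frontier P)) :=
    Integrable.of_integral_ne_zero (by rw [h1]; exact one_ne_zero)
  have hbdry : ∫⁻ x in frontier P, ENNReal.ofReal (u x) ∂μH[n] ≤ (ENNReal.ofReal c)⁻¹ := by
    rw [ENNReal.le_inv_iff_mul_le, mul_comm, ← ENNReal.ofReal_one, ← h1]
    refine ofReal_mul_lintegral_le_integral_mul hc.le (hae hα) (hae fun x hx => ?_) hint
    exact hu.nonneg_of_mem_closure hPc hPo hp₀ hu0 hup₀ (frontier_subset_closure hx)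
  -- `u` need not be Borel on `∂P`; integrability of `α * u` supplies its measurability there.
  have hu_meas : AEMeasurable u (μH[n].restrict (frontier P)) :=
    aemeasurable_of_integrable_mul hα_meas (hae fun x hx => (hc.trans_le (hα x hx)).ne') hint
  refine (lintegral_le_mul_lintegral_frontier hPc hPo hPb hp₀
    (ENNReal.measurable_ofReal.comp_aemeasurable hu_meas) fun x hx hne =>
      ENNReal.ofReal_le_ofReal (hu.le_radialProj hPc hPo hPb hp₀ hu0 hup₀ hx hne)).trans ?_
  exact mul_le_mul_right hbdry _

theorem stmt1_general
    (P : Set (EuclideanSpace ℝ (Fin 2)))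
    (S : Finset (EuclideanSpace ℝ (Fin 2)))
    (hP : P = interior (convexHull ℝ (S : Set (EuclideanSpace ℝ (Fin 2)))))
    (hPbdd : Bornology.IsBounded P)
    (α β : EuclideanSpace ℝ (Fin 2) → ℝ)
    (hαmeas : Measurable α)
    (cα Cα : ℝ) (hcα : 0 < cα)
    (hα : ∀ x ∈ closure P, cα ≤ α x ∧ α x ≤ Cα)
    (cβ Cβ : ℝ) (hcβ : 0 < cβ)
    (hβ : ∀ x ∈ closure P, cβ ≤ β x ∧ β x ≤ Cβ)
    (A : EuclideanSpace ℝ (Fin 2) →ᵃ[ℝ] ℝ)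
    (L : (EuclideanSpace ℝ (Fin 2) → ℝ) → ℝ)
    (hL : ∀ u, L u = (∫ x in frontier P, α x * u x ∂(μH[1]))
        - ∫ x in P, A x * β x * u x)
    (p₀ : EuclideanSpace ℝ (Fin 2)) (hp₀ : p₀ ∈ P) :
    ∃ B : ℝ, ∀ u : EuclideanSpace ℝ (Fin 2) → ℝ,
      ConvexOn ℝ (closure P) u →
      (∫ x in frontier P, α x * u x ∂(μH[1])) = 1 →
      (∀ x ∈ P, 0 ≤ u x) → u p₀ = 0 →
      B ≤ L u := by
  have hPo : IsOpen P := hP ▸ isOpen_interior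
  have hPc : Convex ℝ P := hP ▸ (convex_convexHull ℝ _).interior
  obtain ⟨M, hM⟩ := hPbdd.isCompact_closure.exists_bound_of_continuousOn
    A.continuous_of_finiteDimensional.continuousOn
  have hAβ : ∀ x ∈ P, |A x * β x| ≤ M * Cβ := fun x hx => by
    have hβx := hβ x (subset_closure hx)
    rw [abs_mul, abs_of_pos (hcβ.trans_le hβx.1)]
    exact mul_le_mul (hM x (subset_closure hx)) hβx.2 (hcβ.trans_le hβx.1).le
      ((norm_nonneg _).trans (hM x (subset_closure hx)))
  set K := ENNReal.ofReal (3 * diam (closure P)) * 2 ^ 1 * (ENNReal.ofReal cα)⁻¹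
  refine ⟨1 - M * Cβ * K.toReal, fun u hu h1 hu0 hup₀ => ?_⟩
  have harea : ∫⁻ x in P, ENNReal.ofReal (u x) ≤ K :=
    hu.lintegral_le_of_integral_frontier_eq_one hPc hPo hPbdd hp₀ hu0 hup₀ hαmeas hcα
      (fun x hx => (hα x (frontier_subset_closure hx)).1) (by simpa using h1)
  have hAβu : ∫ x in P, A x * β x * u x ≤ M * Cβ * K.toReal :=
    integral_mul_le_of_lintegral_le ((abs_nonneg _).trans (hAβ p₀ hp₀))
      (ae_restrict_of_forall_mem hPo.measurableSet hAβ)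
      (ae_restrict_of_forall_mem hPo.measurableSet hu0) harea (by finiteness)
  rw [hL, h1]
  linarith

theorem stmt1
    (P : Set (EuclideanSpace ℝ (Fin 2)))
    (S : Finset (EuclideanSpace ℝ (Fin 2)))
    (hP : P = interior (convexHull ℝ (S : Set (EuclideanSpace ℝ (Fin 2)))))
    (hPne : P.Nonempty) (hPbdd : Bornology.IsBounded P)
    (α β : EuclideanSpace ℝ (Fin 2) → ℝ)
    (hαmeas : Measurable α) (hβmeas : Measurable β)
    (cα Cα : ℝ) (hcα : 0 < cα)
    (hα : ∀ x ∈ closure P, cα ≤ α x ∧ α x ≤ Cα)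
    (cβ Cβ : ℝ) (hcβ : 0 < cβ)
    (hβ : ∀ x ∈ closure P, cβ ≤ β x ∧ β x ≤ Cβ)
    (A : EuclideanSpace ℝ (Fin 2) →ᵃ[ℝ] ℝ)
    (L : (EuclideanSpace ℝ (Fin 2) → ℝ) → ℝ)
    (hL : ∀ u, L u = (∫ x in frontier P, α x * u x ∂(μH[1]))
        - ∫ x in P, A x * β x * u x)
    (hLaff : ∀ f : EuclideanSpace ℝ (Fin 2) →ᵃ[ℝ] ℝ, L (fun x => f x) = 0)
    (p₀ : EuclideanSpace ℝ (Fin 2)) (hp₀ : p₀ ∈ P) :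
    ∃ B : ℝ, ∀ u : EuclideanSpace ℝ (Fin 2) → ℝ,
      ConvexOn ℝ (closure P) u →
      (∫ x in frontier P, α x * u x ∂(μH[1])) = 1 →
      (∀ x ∈ P, 0 ≤ u x) → u p₀ = 0 →
      B ≤ L u :=
  stmt1_general P S hP hPbdd α β hαmeas cα Cα hcα hα cβ Cβ hcβ hβ A L hL p₀ hp₀
end

section
/- Let the setup be as described, fix p₀ ∈ P, and let C̃₁ := { u : cl(P) → ℝ convex | ∫_{∂P} α u dσ = 1 and inf_P u = u(p₀) = 0 }. Assume: (i) L(ψ') > 0 for every simple piecewise linear convex function ψ' with nonempty crease; (ii) u₀ ∈ C̃₁ attains the infimum of L over C̃₁ and L(u₀) ≤ 0; (iii) ψ is a simple piecewise linear convex function with nonempty crease; (iv) a₀ > 0 is such that u' := u₀ − a₀ψ is convex on cl(P) with inf_P u' = u'(p₀) = 0. Then a contradiction follows (such a configuration is impossible). -/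
/-!
Put `b := ∫_{∂P} α ψ ≥ 0` and `v := (1 + a₀ b) u₀ - a₀ ψ = u' + a₀ b u₀`. As a nonnegative
combination of `u'` and `u₀`, `v` is convex, nonnegative on `P` and vanishes at `p₀`, and
`∫_{∂P} α v = (1 + a₀ b) - a₀ b = 1`, so `v ∈ C̃₁`. By linearity of `L`,
`L v = L u₀ + a₀ (b L u₀ - L ψ) < L u₀` because `L u₀ ≤ 0 < L ψ`, contradicting minimality.

The analytic input is only integrability, needed for that linearity: on `∂P` the integrand `α ψ`
is dominated by `α u₀ / a₀` since `u' ≥ 0` on `cl P` (a convex function on `cl P` attains its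
minimum at an interior minimiser over `P`), and on `P` the convex function `u₀` is bounded above
by its values at the vertices.
-/

open MeasureTheory Set

theorem closure_interior_convexHull_finset {E : Type*} [NormedAddCommGroup E] [NormedSpace ℝ E]
    [FiniteDimensional ℝ E] {S : Finset E} (h : (interior (convexHull ℝ (S : Set E))).Nonempty) :
    closure (interior (convexHull ℝ (S : Set E))) = convexHull ℝ (S : Set E) := by
  rw [(convex_convexHull ℝ _).closure_interior_eq_closure_of_nonempty_interior h,
    (S.finite_toSet.isCompact_convexHull ℝ).isClosed.closure_eq]

theorem ConvexOn.isMinOn_closure {E : Type*} [AddCommGroup E] [Module ℝ E] [TopologicalSpace E]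
    [IsTopologicalAddGroup E] [ContinuousConstSMul ℝ E] {s : Set E} {f : E → ℝ} {p : E}
    (hs : Convex ℝ s) (hf : ConvexOn ℝ (closure s) f) (hp : p ∈ interior s)
    (hmin : IsMinOn f s p) : IsMinOn f (closure s) p := by
  refine isMinOn_iff.2 fun y hy => ?_
  have hmid : (1 / 2 : ℝ) • p + (1 / 2 : ℝ) • y ∈ s :=
    interior_subset (hs.combo_interior_closure_mem_interior hp hy (by norm_num) (by norm_num)
      (by norm_num))
  have hconv := hf.2 (subset_closure (interior_subset hp)) hy (by norm_num : (0 : ℝ) ≤ 1 / 2)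
    (by norm_num : (0 : ℝ) ≤ 1 / 2) (by norm_num)
  have hpmid := isMinOn_iff.1 hmin _ hmid
  simp only [smul_eq_mul] at hconv
  linarith

theorem ConvexOn.integrableOn_of_subset_convexHull {E : Type*} [NormedAddCommGroup E]
    [NormedSpace ℝ E] [FiniteDimensional ℝ E] [MeasurableSpace E] [BorelSpace E]
    {μ : Measure E} {S : Finset E} {s : Set E} {f : E → ℝ}
    (hf : ConvexOn ℝ (convexHull ℝ (S : Set E)) f) (hs : IsOpen s)
    (hsS : s ⊆ convexHull ℝ (S : Set E)) (hμ : μ s < ⊤) (hbdd : BddBelow (f '' s)) :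
    IntegrableOn f s μ := by
  obtain ⟨m, hm⟩ := hbdd
  obtain ⟨M, hM⟩ := hf.bddAbove_convexHull (subset_convexHull ℝ _)
    (S.finite_toSet.image f).bddAbove
  have hcont : ContinuousOn f s :=
    ((hf.subset interior_subset (convex_convexHull ℝ _).interior).continuousOn
      isOpen_interior).mono (interior_maximal hsS hs)
  refine IntegrableOn.of_bound hμ (hcont.aestronglyMeasurable hs.measurableSet) (max |m| |M|) ?_
  filter_upwards [ae_restrict_mem hs.measurableSet] with x hx
  exact abs_le_max_abs_abs (hm (mem_image_of_mem f hx))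
    (hM (mem_image_of_mem f (hsS hx)))

theorem IntegrableOn.of_mul_le {X : Type*} [MeasurableSpace X] {μ : Measure X} {s : Set X}
    {w f g : X → ℝ} {c : ℝ} (hs : MeasurableSet s) (hc : 0 < c)
    (hg : IntegrableOn (fun x => w x * g x) s μ)
    (hmeas : AEStronglyMeasurable (fun x => w x * f x) (μ.restrict s))
    (hw : ∀ x ∈ s, 0 ≤ w x) (hf : ∀ x ∈ s, 0 ≤ f x) (hfg : ∀ x ∈ s, c * f x ≤ g x) :
    IntegrableOn (fun x => w x * f x) s μ := by
  refine (hg.const_mul c⁻¹).mono' hmeas ?_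
  filter_upwards [ae_restrict_mem hs] with x hx
  rw [Real.norm_eq_abs, abs_of_nonneg (mul_nonneg (hw x hx) (hf x hx)), le_inv_mul_iff₀ hc]
  nlinarith [mul_le_mul_of_nonneg_left (hfg x hx) (hw x hx)]

theorem IntegrableOn.affineMap_mul_mul {E : Type*} [NormedAddCommGroup E] [NormedSpace ℝ E]
    [FiniteDimensional ℝ E] [MeasurableSpace E] [BorelSpace E] {μ : Measure E} {s : Set E}
    {β f : E → ℝ} {c C : ℝ} (A : E →ᵃ[ℝ] ℝ) (hs : Bornology.IsBounded s) (hsm : MeasurableSet s)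
    (hβ : Measurable β) (hβs : ∀ x ∈ s, c ≤ β x ∧ β x ≤ C) (hf : IntegrableOn f s μ) :
    IntegrableOn (fun x => A x * β x * f x) s μ := by
  have hA := A.continuous_of_finiteDimensional
  obtain ⟨M, hM⟩ := hs.isCompact_closure.exists_bound_of_continuousOn hA.continuousOn
  refine hf.bdd_mul (c := M * max |c| |C|) (hA.measurable.mul hβ).aestronglyMeasurable ?_
  filter_upwards [ae_restrict_mem hsm] with x hx
  rw [norm_mul, Real.norm_eq_abs]
  exact mul_le_mul (hM x (subset_closure hx)) (abs_le_max_abs_abs (hβs x hx).1 (hβs x hx).2)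
    (abs_nonneg _) ((norm_nonneg _).trans (hM x (subset_closure hx)))

theorem integral_mul_linear_combination {X : Type*} [MeasurableSpace X] {μ : Measure X}
    {w f g : X → ℝ} (hf : Integrable (fun x => w x * f x) μ)
    (hg : Integrable (fun x => w x * g x) μ) (a c : ℝ) :
    ∫ x, w x * (a * f x + c * g x) ∂μ = a * ∫ x, w x * f x ∂μ + c * ∫ x, w x * g x ∂μ := by
  have hlin : (fun x => w x * (a * f x + c * g x)) = fun x => a * (w x * f x) + c * (w x * g x) := by
    funext x; ring
  rw [hlin, integral_add (hf.const_mul a) (hg.const_mul c), integral_const_mul, integral_const_mul]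

theorem stmt3_general
    (P : Set (EuclideanSpace ℝ (Fin 2)))
    (S : Finset (EuclideanSpace ℝ (Fin 2)))
    (hP : P = interior (convexHull ℝ (S : Set (EuclideanSpace ℝ (Fin 2)))))
    (α β : EuclideanSpace ℝ (Fin 2) → ℝ)
    (hαmeas : Measurable α) (hβmeas : Measurable β)
    (cα Cα : ℝ) (hcα : 0 < cα)
    (hα : ∀ x ∈ closure P, cα ≤ α x ∧ α x ≤ Cα)
    (cβ Cβ : ℝ)
    (hβ : ∀ x ∈ closure P, cβ ≤ β x ∧ β x ≤ Cβ)
    (A : EuclideanSpace ℝ (Fin 2) →ᵃ[ℝ] ℝ)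
    (L : (EuclideanSpace ℝ (Fin 2) → ℝ) → ℝ)
    (hL : ∀ u, L u = (∫ x in frontier P, α x * u x ∂(μH[1]))
        - ∫ x in P, A x * β x * u x)
    (p₀ : EuclideanSpace ℝ (Fin 2)) (hp₀ : p₀ ∈ P)
    (C₁ : Set (EuclideanSpace ℝ (Fin 2) → ℝ))
    (hC₁ : C₁ = {u | ConvexOn ℝ (closure P) u ∧
        (∫ x in frontier P, α x * u x ∂(μH[1])) = 1 ∧
        (∀ x ∈ P, 0 ≤ u x) ∧ u p₀ = 0})
    -- (i) : L is positive on every sPL convex function with nonempty crease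
    (hsPL : ∀ L₀ : EuclideanSpace ℝ (Fin 2) →ᵃ[ℝ] ℝ, L₀ ≠ 0 →
        (P ∩ {x | L₀ x = 0}).Nonempty →
        0 < L (fun x => max (L₀ x) 0))
    -- (ii) : u₀ ∈ C₁ attains the infimum of L over C₁ and L u₀ ≤ 0
    (u₀ : EuclideanSpace ℝ (Fin 2) → ℝ) (hu₀ : u₀ ∈ C₁)
    (hmin : ∀ u ∈ C₁, L u₀ ≤ L u) (hL₀le : L u₀ ≤ 0)
    -- (iii) : ψ = max {L₀, 0} is a sPL convex function with nonempty crease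
    (L₀ : EuclideanSpace ℝ (Fin 2) →ᵃ[ℝ] ℝ) (hL₀ : L₀ ≠ 0)
    (hcrease : (P ∩ {x | L₀ x = 0}).Nonempty)
    (ψ : EuclideanSpace ℝ (Fin 2) → ℝ) (hψ : ψ = fun x => max (L₀ x) 0)
    -- (iv) : a₀ > 0 and u' = u₀ - a₀ ψ is convex with inf_P u' = u' p₀ = 0
    (a₀ : ℝ) (ha₀ : 0 < a₀)
    (u' : EuclideanSpace ℝ (Fin 2) → ℝ) (hu' : u' = fun x => u₀ x - a₀ * ψ x)
    (hu'conv : ConvexOn ℝ (closure P) u')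
    (hu'nonneg : ∀ x ∈ P, 0 ≤ u' x) (hu'p₀ : u' p₀ = 0) :
    False := by
  rw [hC₁] at hu₀ hmin
  obtain ⟨hu₀conv, hu₀bdry, hu₀nonneg, hu₀p₀⟩ := hu₀
  have hK : IsCompact (convexHull ℝ (S : Set (EuclideanSpace ℝ (Fin 2)))) :=
    S.finite_toSet.isCompact_convexHull ℝ
  have hPopen : IsOpen P := hP ▸ isOpen_interior
  have hclP : closure P = convexHull ℝ (S : Set (EuclideanSpace ℝ (Fin 2))) :=
    hP ▸ closure_interior_convexHull_finset (hP ▸ ⟨p₀, hp₀⟩)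
  have hψcont : Continuous ψ := hψ ▸ L₀.continuous_of_finiteDimensional.max continuous_const
  have hψnonneg : ∀ x, 0 ≤ ψ x := fun x => hψ ▸ le_max_right _ _
  have hα0 : ∀ x ∈ frontier P, 0 ≤ α x := fun x hx =>
    hcα.le.trans (hα x (frontier_subset_closure hx)).1
  have hψle : ∀ x ∈ frontier P, a₀ * ψ x ≤ u₀ x := fun x hx => by
    have h := isMinOn_iff.1 (hu'conv.isMinOn_closure (hP ▸ (convex_convexHull ℝ _).interior)
      (hPopen.interior_eq.symm ▸ hp₀) (isMinOn_iff.2 fun x hx => hu'p₀ ▸ hu'nonneg x hx))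
      x (frontier_subset_closure hx)
    rw [hu'p₀] at h
    simp only [hu'] at h
    linarith
  have hαu₀ : IntegrableOn (fun x => α x * u₀ x) (frontier P) μH[1] :=
    Integrable.of_integral_ne_zero (by rw [hu₀bdry]; exact one_ne_zero)
  have hαψ : IntegrableOn (fun x => α x * ψ x) (frontier P) μH[1] :=
    IntegrableOn.of_mul_le isClosed_frontier.measurableSet ha₀ hαu₀
      (hαmeas.mul hψcont.measurable).aestronglyMeasurable hα0 (fun x _ => hψnonneg x) hψle
  have hPbdd : Bornology.IsBounded P := hK.isBounded.subset (hclP ▸ subset_closure)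
  have hAβ : ∀ f, IntegrableOn f P → IntegrableOn (fun x => A x * β x * f x) P :=
    fun _ => IntegrableOn.affineMap_mul_mul A hPbdd hPopen.measurableSet hβmeas
      fun x hx => hβ x (subset_closure hx)
  have hAu₀ := hAβ u₀ <| (hclP ▸ hu₀conv).integrableOn_of_subset_convexHull hPopen
    (hclP ▸ subset_closure) hPbdd.measure_lt_top ⟨0, by rintro _ ⟨x, hx, rfl⟩; exact hu₀nonneg x hx⟩
  have hAψ := hAβ ψ <| (hψcont.continuousOn.integrableOn_compact (hclP ▸ hK)).mono_set
    subset_closure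
  set b := ∫ x in frontier P, α x * ψ x ∂μH[1]
  have hb : 0 ≤ b := setIntegral_nonneg isClosed_frontier.measurableSet fun x hx =>
    mul_nonneg (hα0 x hx) (hψnonneg x)
  set v := fun x => (1 + a₀ * b) * u₀ x + (-a₀) * ψ x
  have hv : v = fun x => u' x + (a₀ * b) * u₀ x := by
    funext x; rw [hu']; ring
  have hab : 0 ≤ a₀ * b := mul_nonneg ha₀.le hb
  have hLu₀v := hmin v ⟨hv ▸ hu'conv.add (hu₀conv.smul hab),
    by rw [integral_mul_linear_combination hαu₀ hαψ, hu₀bdry]; ring,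
    fun x hx => hv ▸ add_nonneg (hu'nonneg x hx) (mul_nonneg hab (hu₀nonneg x hx)),
    by rw [hv]; simp [hu'p₀, hu₀p₀]⟩
  rw [hL v, hL u₀, integral_mul_linear_combination hαu₀ hαψ,
    integral_mul_linear_combination (w := fun x => A x * β x) hAu₀ hAψ] at hLu₀v
  have hLψ := hψ ▸ hsPL L₀ hL₀ hcrease
  rw [hL] at hL₀le hLψ
  nlinarith [mul_nonneg hab (neg_nonneg.2 hL₀le)]

theorem stmt3
    (P : Set (EuclideanSpace ℝ (Fin 2)))
    (S : Finset (EuclideanSpace ℝ (Fin 2)))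
    (hP : P = interior (convexHull ℝ (S : Set (EuclideanSpace ℝ (Fin 2)))))
    (hPne : P.Nonempty) (hPbdd : Bornology.IsBounded P)
    (α β : EuclideanSpace ℝ (Fin 2) → ℝ)
    (hαmeas : Measurable α) (hβmeas : Measurable β)
    (cα Cα : ℝ) (hcα : 0 < cα)
    (hα : ∀ x ∈ closure P, cα ≤ α x ∧ α x ≤ Cα)
    (cβ Cβ : ℝ) (hcβ : 0 < cβ)
    (hβ : ∀ x ∈ closure P, cβ ≤ β x ∧ β x ≤ Cβ)
    (A : EuclideanSpace ℝ (Fin 2) →ᵃ[ℝ] ℝ)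
    (L : (EuclideanSpace ℝ (Fin 2) → ℝ) → ℝ)
    (hL : ∀ u, L u = (∫ x in frontier P, α x * u x ∂(μH[1]))
        - ∫ x in P, A x * β x * u x)
    (hLaff : ∀ f : EuclideanSpace ℝ (Fin 2) →ᵃ[ℝ] ℝ, L (fun x => f x) = 0)
    (p₀ : EuclideanSpace ℝ (Fin 2)) (hp₀ : p₀ ∈ P)
    (C₁ : Set (EuclideanSpace ℝ (Fin 2) → ℝ))
    (hC₁ : C₁ = {u | ConvexOn ℝ (closure P) u ∧
        (∫ x in frontier P, α x * u x ∂(μH[1])) = 1 ∧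
        (∀ x ∈ P, 0 ≤ u x) ∧ u p₀ = 0})
    -- (i) : L is positive on every sPL convex function with nonempty crease
    (hsPL : ∀ L₀ : EuclideanSpace ℝ (Fin 2) →ᵃ[ℝ] ℝ, L₀ ≠ 0 →
        (P ∩ {x | L₀ x = 0}).Nonempty →
        0 < L (fun x => max (L₀ x) 0))
    -- (ii) : u₀ ∈ C₁ attains the infimum of L over C₁ and L u₀ ≤ 0
    (u₀ : EuclideanSpace ℝ (Fin 2) → ℝ) (hu₀ : u₀ ∈ C₁)
    (hmin : ∀ u ∈ C₁, L u₀ ≤ L u) (hL₀le : L u₀ ≤ 0)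
    -- (iii) : ψ = max {L₀, 0} is a sPL convex function with nonempty crease
    (L₀ : EuclideanSpace ℝ (Fin 2) →ᵃ[ℝ] ℝ) (hL₀ : L₀ ≠ 0)
    (hcrease : (P ∩ {x | L₀ x = 0}).Nonempty)
    (ψ : EuclideanSpace ℝ (Fin 2) → ℝ) (hψ : ψ = fun x => max (L₀ x) 0)
    -- (iv) : a₀ > 0 and u' = u₀ - a₀ ψ is convex with inf_P u' = u' p₀ = 0
    (a₀ : ℝ) (ha₀ : 0 < a₀)
    (u' : EuclideanSpace ℝ (Fin 2) → ℝ) (hu' : u' = fun x => u₀ x - a₀ * ψ x)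
    (hu'conv : ConvexOn ℝ (closure P) u')
    (hu'nonneg : ∀ x ∈ P, 0 ≤ u' x) (hu'p₀ : u' p₀ = 0) :
    False :=
  stmt3_general P S hP α β hαmeas hβmeas cα Cα hcα hα cβ Cβ hβ A L hL p₀ hp₀ C₁ hC₁ hsPL u₀ hu₀ hmin
    hL₀le L₀ hL₀ hcrease ψ hψ a₀ ha₀ u' hu' hu'conv hu'nonneg hu'p₀
end

section
/- Let the setup be as described, let k and n be real numbers with n ≠ 2, define s_J := −Σ_{i,j} ∂_i∂_j H_{ij}, define Δ_J φ := −Σ_{i,j} [ (∂_i∂_j φ) H_{ij} + (∂_i φ)(∂_j H_{ij}) ] for smooth φ, and define s_{J,f,k,n} := f^{−k} s_J + (4(n−1)/(n−2)) f^{−k(n+2)/4} Δ_J ( f^{k(n−2)/4} ). Then at every point of Ω: s_{J,f,k,n} = −f^{−k} Σ_{i,j} [ ∂_i∂_j H_{ij} + (k(n−1)/f)(∂_i f)(∂_j H_{ij}) + (k(n−1)/f²)( k(n−2)/4 − 1 )(∂_i f)(∂_j f) H_{ij} ]. -/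
/-- The partial derivative in the `i`-th coordinate direction. -/
noncomputable def partialD {m : ℕ} (i : Fin m) (φ : (Fin m → ℝ) → ℝ) :
    (Fin m → ℝ) → ℝ :=
  fun x => fderiv ℝ φ x (Pi.single i 1)

theorem stmt8 {m : ℕ} (hm : 1 ≤ m)
    (Ω : Set (Fin m → ℝ)) (hΩopen : IsOpen Ω)
    (H : (Fin m → ℝ) → Matrix (Fin m) (Fin m) ℝ)
    (hHsmooth : ∀ i j, ContDiffOn ℝ (⊤ : ℕ∞) (fun x => H x i j) Ω)
    (hHsymm : ∀ x ∈ Ω, (H x).IsSymm)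
    (f : (Fin m → ℝ) →ᵃ[ℝ] ℝ) (hf : ∀ x ∈ Ω, 0 < f x)
    (k n : ℝ) (hn : n ≠ 2)
    (sJ : (Fin m → ℝ) → ℝ)
    (hsJ : ∀ x, sJ x = -∑ i, ∑ j, partialD i (partialD j (fun y => H y i j)) x)
    (ΔJ : ((Fin m → ℝ) → ℝ) → (Fin m → ℝ) → ℝ)
    (hΔJ : ∀ φ x, ΔJ φ x
      = -∑ i, ∑ j, (partialD i (partialD j φ) x * H x i j
          + partialD i φ x * partialD j (fun y => H y i j) x))
    (s : (Fin m → ℝ) → ℝ)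
    (hs : ∀ x, s x = (f x) ^ (-k) * sJ x
      + (4 * (n - 1) / (n - 2)) * (f x) ^ (-(k * (n + 2)) / 4)
          * ΔJ (fun y => (f y) ^ (k * (n - 2) / 4)) x) :
    ∀ x ∈ Ω,
      s x = -(f x) ^ (-k) * ∑ i, ∑ j,
          (partialD i (partialD j (fun y => H y i j)) x
            + (k * (n - 1) / f x) * partialD i (fun y => f y) x
                * partialD j (fun y => H y i j) x
            + (k * (n - 1) / (f x) ^ 2) * (k * (n - 2) / 4 - 1)
                * partialD i (fun y => f y) x * partialD j (fun y => f y) x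
                * H x i j) := by

  intro x hx
  have hfx : 0 < f x := hf x hx
  set L : (Fin m → ℝ) →L[ℝ] ℝ := LinearMap.toContinuousLinearMap f.linear with hLdef
  have hL : ∀ y, HasFDerivAt (fun y => f y) L y := by
    intro y
    have hfe : (fun y => f y) = fun y => L y + f 0 := by
      funext z
      conv_lhs => rw [AffineMap.decomp f]
      simp [hLdef]
    rw [hfe]
    exact L.hasFDerivAt.add_const (f 0)
  have hf1 : ∀ i : Fin m, partialD i (fun y => f y) x = L (Pi.single i 1) := fun i => by
    rw [partialD, (hL x).fderiv]
  set c : ℝ := k * (n - 2) / 4 with hc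
  set φ : (Fin m → ℝ) → ℝ := fun y => (f y) ^ c with hφdef
  have hφd : ∀ y ∈ Ω, HasFDerivAt φ ((c * f y ^ (c - 1)) • L) y := fun y hy =>
    (hL y).rpow_const (Or.inl (hf y hy).ne')
  have hφ1 : ∀ (j : Fin m), ∀ y ∈ Ω,
      partialD j φ y = c * f y ^ (c - 1) * L (Pi.single j 1) := by
    intro j y hy
    rw [partialD, (hφd y hy).fderiv]
    simp
  have hφ2 : ∀ i j : Fin m, partialD i (partialD j φ) x
      = c * (c - 1) * f x ^ (c - 2) * L (Pi.single i 1) * L (Pi.single j 1) := by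
    intro i j
    have heq : partialD j φ =ᶠ[nhds x] fun y => (c * L (Pi.single j 1)) * f y ^ (c - 1) :=
      Filter.eventuallyEq_of_mem (hΩopen.mem_nhds hx) (fun y hy => by
        rw [hφ1 j y hy]; ring)
    have hd : HasFDerivAt (fun y => (c * L (Pi.single j 1)) * f y ^ (c - 1))
        ((c * L (Pi.single j 1)) • (((c - 1) * f x ^ (c - 1 - 1)) • L)) x :=
      ((hL x).rpow_const (Or.inl hfx.ne')).const_mul _
    have h21 : c - 1 - 1 = c - 2 := by ring
    rw [h21] at hd
    rw [partialD, heq.fderiv_eq, hd.fderiv]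
    simp
    ring
  have e1 : f x ^ (-(k * (n + 2)) / 4) * f x ^ (c - 1) = f x ^ (-k) / f x := by
    rw [← Real.rpow_add hfx, show -(k * (n + 2)) / 4 + (c - 1) = -k - 1 by rw [hc]; ring,
      Real.rpow_sub hfx, Real.rpow_one]
  have e2 : f x ^ (-(k * (n + 2)) / 4) * f x ^ (c - 2) = f x ^ (-k) / f x ^ 2 := by
    rw [← Real.rpow_add hfx, show -(k * (n + 2)) / 4 + (c - 2) = -k - 2 by rw [hc]; ring,
      Real.rpow_sub hfx]
    norm_num [Real.rpow_natCast]
  have hn2 : n - 2 ≠ 0 := sub_ne_zero.mpr hn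
  have hAc : 4 * (n - 1) / (n - 2) * c = k * (n - 1) := by
    rw [hc]
    field_simp
  rw [hs x, hsJ x, hΔJ φ x]
  simp only [hφ2, fun j => hφ1 j x hx, hf1]
  rw [show -(f x) ^ (-k) * ∑ i, ∑ j,
      (partialD i (partialD j (fun y => H y i j)) x
        + (k * (n - 1) / f x) * L (Pi.single i 1) * partialD j (fun y => H y i j) x
        + (k * (n - 1) / (f x) ^ 2) * (k * (n - 2) / 4 - 1)
            * L (Pi.single i 1) * L (Pi.single j 1) * H x i j)
    = -((f x) ^ (-k) * ∑ i, ∑ j,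
      (partialD i (partialD j (fun y => H y i j)) x
        + (k * (n - 1) / f x) * L (Pi.single i 1) * partialD j (fun y => H y i j) x
        + (k * (n - 1) / (f x) ^ 2) * (k * (n - 2) / 4 - 1)
            * L (Pi.single i 1) * L (Pi.single j 1) * H x i j)) from by ring]
  rw [mul_neg, mul_neg, ← neg_add]
  congr 1
  rw [Finset.mul_sum, Finset.mul_sum, Finset.mul_sum, ← Finset.sum_add_distrib]
  refine Finset.sum_congr rfl fun i _ => ?_
  rw [Finset.mul_sum, Finset.mul_sum, Finset.mul_sum, ← Finset.sum_add_distrib]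
  refine Finset.sum_congr rfl fun j _ => ?_
  have h1 : 4 * (n - 1) / (n - 2) * f x ^ (-(k * (n + 2)) / 4)
      * (c * (c - 1) * f x ^ (c - 2) * L (Pi.single i 1) * L (Pi.single j 1) * H x i j)
      = f x ^ (-k) * (k * (n - 1) / (f x) ^ 2 * (c - 1)
          * L (Pi.single i 1) * L (Pi.single j 1) * H x i j) := by
    calc 4 * (n - 1) / (n - 2) * f x ^ (-(k * (n + 2)) / 4)
        * (c * (c - 1) * f x ^ (c - 2) * L (Pi.single i 1) * L (Pi.single j 1) * H x i j)
        = (4 * (n - 1) / (n - 2) * c) * (f x ^ (-(k * (n + 2)) / 4) * f x ^ (c - 2))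
            * ((c - 1) * L (Pi.single i 1) * L (Pi.single j 1) * H x i j) := by ring
      _ = _ := by rw [hAc, e2]; ring
  have h2 : 4 * (n - 1) / (n - 2) * f x ^ (-(k * (n + 2)) / 4)
      * (c * f x ^ (c - 1) * L (Pi.single i 1) * partialD j (fun y => H y i j) x)
      = f x ^ (-k) * (k * (n - 1) / f x * L (Pi.single i 1) * partialD j (fun y => H y i j) x) := by
    calc 4 * (n - 1) / (n - 2) * f x ^ (-(k * (n + 2)) / 4)
        * (c * f x ^ (c - 1) * L (Pi.single i 1) * partialD j (fun y => H y i j) x)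
        = (4 * (n - 1) / (n - 2) * c) * (f x ^ (-(k * (n + 2)) / 4) * f x ^ (c - 1))
            * (L (Pi.single i 1) * partialD j (fun y => H y i j) x) := by ring
      _ = _ := by rw [hAc, e1]; ring
  rw [mul_add, h1, h2]
  ring
end

section
/- Let the setup be as described, let n be a real number with n ≠ 2, define s_J := −Σ_{i,j} ∂_i∂_j H_{ij}, define Δ_J φ := −Σ_{i,j} [ (∂_i∂_j φ) H_{ij} + (∂_i φ)(∂_j H_{ij}) ] for smooth φ, and define s_{J,f,−2,n} := f² s_J + (4(n−1)/(n−2)) f^{(n+2)/2} Δ_J ( f^{−(n−2)/2} ). Then at every point of Ω: s_{J,f,−2,n} · f^{−1−n} = −Σ_{i,j} ∂_i∂_j ( f^{1−n} H_{ij} ). -/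
lemma affine_hasFDerivAt {m : ℕ} (f : (Fin m → ℝ) →ᵃ[ℝ] ℝ) (y : Fin m → ℝ) :
    HasFDerivAt f (LinearMap.toContinuousLinearMap f.linear) y := by
  have h : (f : (Fin m → ℝ) → ℝ) = fun z => f.linear z + f 0 := by
    ext z; conv_lhs => rw [f.decomp]
    rfl
  rw [h]
  simpa using (LinearMap.toContinuousLinearMap f.linear).hasFDerivAt.add_const (f 0)

lemma pdA {m : ℕ} (f : (Fin m → ℝ) →ᵃ[ℝ] ℝ) (g : (Fin m → ℝ) → ℝ) {y : Fin m → ℝ}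
    (hy : f y ≠ 0) (hg : DifferentiableAt ℝ g y) (b : ℝ) (j : Fin m) :
    partialD j (fun z => f z ^ b * g z) y
      = b * f y ^ (b - 1) * f.linear (Pi.single j 1) * g y + f y ^ b * partialD j g y := by
  have h1 := (affine_hasFDerivAt f y).rpow_const (p := b) (Or.inl hy)
  have h2 := h1.mul hg.hasFDerivAt
  unfold partialD
  rw [show (fun z => f z ^ b * g z) = (fun x => f x ^ b) * g from rfl, h2.fderiv]
  simp
  ring

lemma pdA' {m : ℕ} (f : (Fin m → ℝ) →ᵃ[ℝ] ℝ) {y : Fin m → ℝ}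
    (hy : f y ≠ 0) (a : ℝ) (j : Fin m) :
    partialD j (fun z => f z ^ a) y = a * f y ^ (a - 1) * f.linear (Pi.single j 1) := by
  have h1 := (affine_hasFDerivAt f y).rpow_const (p := a) (Or.inl hy)
  unfold partialD
  rw [h1.fderiv]
  simp


lemma pdB {m : ℕ} (f : (Fin m → ℝ) →ᵃ[ℝ] ℝ) {U : Set (Fin m → ℝ)} (hU : IsOpen U)
    {x : Fin m → ℝ} (hx : x ∈ U) (hfU : ∀ y ∈ U, 0 < f y)
    {g : (Fin m → ℝ) → ℝ} (hg : ContDiffOn ℝ (⊤ : ℕ∞) g U) (b : ℝ) (i j : Fin m) :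
    partialD i (partialD j (fun z => f z ^ b * g z)) x
      = b * (b - 1) * f x ^ (b - 2) * f.linear (Pi.single i 1) * f.linear (Pi.single j 1) * g x
        + b * f x ^ (b - 1) * f.linear (Pi.single j 1) * partialD i g x
        + b * f x ^ (b - 1) * f.linear (Pi.single i 1) * partialD j g x
        + f x ^ b * partialD i (partialD j g) x := by
  have hUx : U ∈ nhds x := hU.mem_nhds hx
  have hgat : ∀ y ∈ U, ContDiffAt ℝ (⊤ : ℕ∞) g y := fun y hy => hg.contDiffAt (hU.mem_nhds hy)
  set L := LinearMap.toContinuousLinearMap f.linear with hL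
  have hev : partialD j (fun z => f z ^ b * g z)
      =ᶠ[nhds x] fun y => b * f y ^ (b - 1) * L (Pi.single j 1) * g y + f y ^ b * partialD j g y := by
    filter_upwards [hUx] with y hy
    exact pdA f g (ne_of_gt (hfU y hy)) ((hgat y hy).differentiableAt (by simp)) b j
  have hgx := hgat x hx
  have hpdj : ContDiffAt ℝ (⊤ : ℕ∞) (partialD j g) x := by
    have h2 : ContDiffAt ℝ (⊤ : ℕ∞) (fderiv ℝ g) x := hgx.fderiv_right (by simp)
    exact h2.clm_apply contDiffAt_const
  have hfx : f x ≠ 0 := ne_of_gt (hfU x hx)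
  -- derivatives of pieces at x
  have h1 : HasFDerivAt (fun y => f y ^ (b - 1)) (((b - 1) * f x ^ (b - 1 - 1)) • L) x :=
    (affine_hasFDerivAt f x).rpow_const (Or.inl hfx)
  have hfb : HasFDerivAt (fun y => f y ^ b) ((b * f x ^ (b - 1)) • L) x :=
    (affine_hasFDerivAt f x).rpow_const (Or.inl hfx)
  have hgd : HasFDerivAt g (fderiv ℝ g x) x := (hgx.differentiableAt (by simp)).hasFDerivAt
  have hpd : HasFDerivAt (partialD j g) (fderiv ℝ (partialD j g) x) x :=
    (hpdj.differentiableAt (by simp)).hasFDerivAt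
  have htot := (((h1.const_mul b).mul_const (L (Pi.single j 1))).mul hgd).add (hfb.mul hpd)
  have key : partialD i (partialD j (fun z => f z ^ b * g z)) x
      = (fderiv ℝ (fun y => b * f y ^ (b - 1) * L (Pi.single j 1) * g y + f y ^ b * partialD j g y) x)
          (Pi.single i 1) := by
    show (fderiv ℝ (partialD j fun z => f z ^ b * g z) x) (Pi.single i 1) = _
    rw [hev.fderiv_eq]
  rw [key, show (fun y => b * f y ^ (b - 1) * L (Pi.single j 1) * g y + f y ^ b * partialD j g y) = (fun y => b * f y ^ (b - 1) * L (Pi.single j 1)) * g + (fun y => f y ^ b) * partialD j g from rfl, htot.fderiv]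
  have e1 : b - 1 - 1 = b - 2 := by ring
  have e2 : partialD i g x = fderiv ℝ g x (Pi.single i 1) := rfl
  have e3 : partialD i (partialD j g) x = fderiv ℝ (partialD j g) x (Pi.single i 1) := rfl
  simp [e1, e2, e3, hL, LinearMap.coe_toContinuousLinearMap']
  ring

lemma pdB' {m : ℕ} (f : (Fin m → ℝ) →ᵃ[ℝ] ℝ) {U : Set (Fin m → ℝ)} (hU : IsOpen U)
    {x : Fin m → ℝ} (hx : x ∈ U) (hfU : ∀ y ∈ U, 0 < f y) (a : ℝ) (i j : Fin m) :
    partialD i (partialD j (fun z => f z ^ a)) x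
      = a * (a - 1) * f x ^ (a - 2) * f.linear (Pi.single i 1) * f.linear (Pi.single j 1) := by
  have hUx : U ∈ nhds x := hU.mem_nhds hx
  set L := LinearMap.toContinuousLinearMap f.linear with hL
  have hev : partialD j (fun z => f z ^ a)
      =ᶠ[nhds x] fun y => a * f y ^ (a - 1) * L (Pi.single j 1) := by
    filter_upwards [hUx] with y hy
    exact pdA' f (ne_of_gt (hfU y hy)) a j
  have hfx : f x ≠ 0 := ne_of_gt (hfU x hx)
  have h1 : HasFDerivAt (fun y => f y ^ (a - 1)) (((a - 1) * f x ^ (a - 1 - 1)) • L) x :=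
    (affine_hasFDerivAt f x).rpow_const (Or.inl hfx)
  have htot := (h1.const_mul a).mul_const (L (Pi.single j 1))
  have key : partialD i (partialD j (fun z => f z ^ a)) x
      = (fderiv ℝ (fun y => a * f y ^ (a - 1) * L (Pi.single j 1)) x) (Pi.single i 1) := by
    show (fderiv ℝ (partialD j fun z => f z ^ a) x) (Pi.single i 1) = _
    rw [hev.fderiv_eq]
  rw [key, htot.fderiv]
  have e1 : a - 1 - 1 = a - 2 := by ring
  simp [e1, hL, LinearMap.coe_toContinuousLinearMap']
  ring


theorem stmt10 {m : ℕ} (hm : 1 ≤ m)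
    (Ω : Set (Fin m → ℝ)) (hΩopen : IsOpen Ω)
    (H : (Fin m → ℝ) → Matrix (Fin m) (Fin m) ℝ)
    (hHsmooth : ∀ i j, ContDiffOn ℝ (⊤ : ℕ∞) (fun x => H x i j) Ω)
    (hHsymm : ∀ x ∈ Ω, (H x).IsSymm)
    (f : (Fin m → ℝ) →ᵃ[ℝ] ℝ) (hf : ∀ x ∈ Ω, 0 < f x)
    (n : ℝ) (hn : n ≠ 2)
    (sJ : (Fin m → ℝ) → ℝ)
    (hsJ : ∀ x, sJ x = -∑ i, ∑ j, partialD i (partialD j (fun y => H y i j)) x)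
    (ΔJ : ((Fin m → ℝ) → ℝ) → (Fin m → ℝ) → ℝ)
    (hΔJ : ∀ φ x, ΔJ φ x
      = -∑ i, ∑ j, (partialD i (partialD j φ) x * H x i j
          + partialD i φ x * partialD j (fun y => H y i j) x))
    (s : (Fin m → ℝ) → ℝ)
    (hs : ∀ x, s x = (f x) ^ 2 * sJ x
      + (4 * (n - 1) / (n - 2)) * (f x) ^ ((n + 2) / 2)
          * ΔJ (fun y => (f y) ^ (-(n - 2) / 2)) x) :
    ∀ x ∈ Ω,
      s x * (f x) ^ (-1 - n)
        = -∑ i, ∑ j,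
            partialD i (partialD j (fun y => (f y) ^ (1 - n) * H y i j)) x := by
  intro x hx
  have hfx : (0:ℝ) < f x := hf x hx
  have hfne : f x ≠ 0 := ne_of_gt hfx
  have hn2 : n - 2 ≠ 0 := sub_ne_zero_of_ne hn
  have hφ1 : ∀ i : Fin m, partialD i (fun y => f y ^ (-(n - 2) / 2)) x
      = -(n - 2) / 2 * f x ^ (-(n - 2) / 2 - 1) * f.linear (Pi.single i 1) :=
    fun i => pdA' f hfne _ i
  have hφ2 : ∀ i j : Fin m, partialD i (partialD j (fun y => f y ^ (-(n - 2) / 2))) x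
      = -(n - 2) / 2 * (-(n - 2) / 2 - 1) * f x ^ (-(n - 2) / 2 - 2)
          * f.linear (Pi.single i 1) * f.linear (Pi.single j 1) :=
    fun i j => pdB' f hΩopen hx hf _ i j
  have hHrw : ∀ i j : Fin m, partialD i (partialD j (fun y => f y ^ (1 - n) * H y i j)) x
      = (1 - n) * (1 - n - 1) * f x ^ (1 - n - 2)
            * f.linear (Pi.single i 1) * f.linear (Pi.single j 1) * H x i j
        + (1 - n) * f x ^ (1 - n - 1) * f.linear (Pi.single j 1)
            * partialD i (fun y => H y i j) x
        + (1 - n) * f x ^ (1 - n - 1) * f.linear (Pi.single i 1)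
            * partialD j (fun y => H y i j) x
        + f x ^ (1 - n) * partialD i (partialD j (fun y => H y i j)) x :=
    fun i j => pdB f hΩopen hx hf (hHsmooth i j) (1 - n) i j
  rw [hs x, hsJ x, hΔJ]
  simp only [hφ1, hφ2, hHrw, Finset.sum_add_distrib]
  have P1 : ∑ i : Fin m, ∑ j : Fin m,
        -(n - 2) / 2 * (-(n - 2) / 2 - 1) * f x ^ (-(n - 2) / 2 - 2) * f.linear (Pi.single i 1) *
          f.linear (Pi.single j 1) * H x i j
      = -(n - 2) / 2 * (-(n - 2) / 2 - 1) * f x ^ (-(n - 2) / 2 - 2)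
          * ∑ i : Fin m, ∑ j : Fin m,
              f.linear (Pi.single i 1) * f.linear (Pi.single j 1) * H x i j := by
    rw [Finset.mul_sum]
    refine Finset.sum_congr rfl fun i _ => ?_
    rw [Finset.mul_sum]
    exact Finset.sum_congr rfl fun j _ => by ring
  have P2 : ∑ i : Fin m, ∑ j : Fin m,
        -(n - 2) / 2 * f x ^ (-(n - 2) / 2 - 1) * f.linear (Pi.single i 1) *
          partialD j (fun y => H y i j) x
      = -(n - 2) / 2 * f x ^ (-(n - 2) / 2 - 1)
          * ∑ i : Fin m, ∑ j : Fin m,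
              f.linear (Pi.single i 1) * partialD j (fun y => H y i j) x := by
    rw [Finset.mul_sum]
    refine Finset.sum_congr rfl fun i _ => ?_
    rw [Finset.mul_sum]
    exact Finset.sum_congr rfl fun j _ => by ring
  have PA : ∑ i : Fin m, ∑ j : Fin m,
        (1 - n) * (1 - n - 1) * f x ^ (1 - n - 2) * f.linear (Pi.single i 1) *
          f.linear (Pi.single j 1) * H x i j
      = (1 - n) * (1 - n - 1) * f x ^ (1 - n - 2)
          * ∑ i : Fin m, ∑ j : Fin m,
              f.linear (Pi.single i 1) * f.linear (Pi.single j 1) * H x i j := by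
    rw [Finset.mul_sum]
    refine Finset.sum_congr rfl fun i _ => ?_
    rw [Finset.mul_sum]
    exact Finset.sum_congr rfl fun j _ => by ring
  have PB : ∑ i : Fin m, ∑ j : Fin m,
        (1 - n) * f x ^ (1 - n - 1) * f.linear (Pi.single j 1) * partialD i (fun y => H y i j) x
      = (1 - n) * f x ^ (1 - n - 1)
          * ∑ i : Fin m, ∑ j : Fin m,
              f.linear (Pi.single i 1) * partialD j (fun y => H y i j) x := by
    rw [Finset.sum_comm, Finset.mul_sum]
    refine Finset.sum_congr rfl fun i _ => ?_
    rw [Finset.mul_sum]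
    refine Finset.sum_congr rfl fun j _ => ?_
    have e : partialD j (fun y => H y j i) x = partialD j (fun y => H y i j) x := by
      have hev : (fun y => H y j i) =ᶠ[nhds x] fun y => H y i j := by
        filter_upwards [hΩopen.mem_nhds hx] with y hy
        exact (hHsymm y hy).apply i j
      unfold partialD
      rw [hev.fderiv_eq]
    rw [e]
    ring
  have PC : ∑ i : Fin m, ∑ j : Fin m,
        (1 - n) * f x ^ (1 - n - 1) * f.linear (Pi.single i 1) * partialD j (fun y => H y i j) x
      = (1 - n) * f x ^ (1 - n - 1)
          * ∑ i : Fin m, ∑ j : Fin m,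
              f.linear (Pi.single i 1) * partialD j (fun y => H y i j) x := by
    rw [Finset.mul_sum]
    refine Finset.sum_congr rfl fun i _ => ?_
    rw [Finset.mul_sum]
    exact Finset.sum_congr rfl fun j _ => by ring
  have PD : ∑ i : Fin m, ∑ j : Fin m,
        f x ^ (1 - n) * partialD i (partialD j fun y => H y i j) x
      = f x ^ (1 - n)
          * ∑ i : Fin m, ∑ j : Fin m, partialD i (partialD j fun y => H y i j) x := by
    simp only [Finset.mul_sum]
  rw [P1, P2, PA, PB, PC, PD]
  set S1 := ∑ i : Fin m, ∑ j : Fin m,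
      f.linear (Pi.single i 1) * f.linear (Pi.single j 1) * H x i j with hS1
  set S2 := ∑ i : Fin m, ∑ j : Fin m,
      f.linear (Pi.single i 1) * partialD j (fun y => H y i j) x with hS2
  set S3 := ∑ i : Fin m, ∑ j : Fin m, partialD i (partialD j fun y => H y i j) x with hS3
  have k1 : f x ^ (2:ℕ) * f x ^ (-1 - n) = f x ^ (1 - n) := by
    rw [← Real.rpow_natCast (f x) 2, ← Real.rpow_add hfx]
    congr 1
    push_cast
    ring
  have k2 : f x ^ ((n + 2) / 2) * f x ^ (-(n - 2) / 2 - 2) * f x ^ (-1 - n)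
      = f x ^ (1 - n - 2) := by
    rw [← Real.rpow_add hfx, ← Real.rpow_add hfx]
    congr 1
    ring
  have k3 : f x ^ ((n + 2) / 2) * f x ^ (-(n - 2) / 2 - 1) * f x ^ (-1 - n)
      = f x ^ (1 - n - 1) := by
    rw [← Real.rpow_add hfx, ← Real.rpow_add hfx]
    congr 1
    ring
  calc (f x ^ 2 * -S3 +
        4 * (n - 1) / (n - 2) * f x ^ ((n + 2) / 2) *
          -(-(n - 2) / 2 * (-(n - 2) / 2 - 1) * f x ^ (-(n - 2) / 2 - 2) * S1 +
            -(n - 2) / 2 * f x ^ (-(n - 2) / 2 - 1) * S2)) * f x ^ (-1 - n)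
      = (f x ^ 2 * f x ^ (-1 - n)) * (-S3)
        + (4 * (n - 1) / (n - 2) * -(-(n - 2) / 2 * (-(n - 2) / 2 - 1)) * S1)
            * (f x ^ ((n + 2) / 2) * f x ^ (-(n - 2) / 2 - 2) * f x ^ (-1 - n))
        + (4 * (n - 1) / (n - 2) * -(-(n - 2) / 2) * S2)
            * (f x ^ ((n + 2) / 2) * f x ^ (-(n - 2) / 2 - 1) * f x ^ (-1 - n)) := by
        ring
    _ = f x ^ (1 - n) * (-S3)
        + (4 * (n - 1) / (n - 2) * -(-(n - 2) / 2 * (-(n - 2) / 2 - 1)) * S1) * f x ^ (1 - n - 2)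
        + (4 * (n - 1) / (n - 2) * -(-(n - 2) / 2) * S2) * f x ^ (1 - n - 1) := by
        rw [k1, k2, k3]
    _ = -((1 - n) * (1 - n - 1) * f x ^ (1 - n - 2) * S1 + (1 - n) * f x ^ (1 - n - 1) * S2 +
          (1 - n) * f x ^ (1 - n - 1) * S2 + f x ^ (1 - n) * S3) := by
        field_simp
        ring
end

section
/- Let F(x) := x⁴ − 4x³ + 16x² − 16x + 4 and let α ∈ (0.38, 0.39) be a root of F such that F > 0 on (0, α). For 0 < p < α define a_p^± := −p² + 4p − 2 ± √(F(p)), b_p^± := ±2√(F(p)), c_p^± := −p² − 2p + 2 ∓ √(F(p)). Then for every p with 0 < p < α and for each choice of sign, the affine function f_p^± (x₁,x₂) := a_p^± x₁ + b_p^± x₂ + c_p^± is positive at every point of Δ_p; equivalently, (a_p^±, b_p^±, c_p^±) satisfies c_p^± > 0, a_p^± p + c_p^± > 0, a_p^± p + b_p^±(1−p) + c_p^± > 0 and b_p^± + c_p^± > 0. -/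
theorem stmt15 (F : ℝ → ℝ)
    (hF : ∀ x, F x = x ^ 4 - 4 * x ^ 3 + 16 * x ^ 2 - 16 * x + 4)
    (α : ℝ) (hα0 : 0.38 < α) (hα1 : α < 0.39) (hαroot : F α = 0)
    (hFpos : ∀ x : ℝ, 0 < x → x < α → 0 < F x)
    (p : ℝ) (hp0 : 0 < p) (hpα : p < α)
    (s : ℝ) (hs : s = 1 ∨ s = -1)
    (a b c : ℝ)
    (ha : a = -p ^ 2 + 4 * p - 2 + s * Real.sqrt (F p))
    (hb : b = s * (2 * Real.sqrt (F p)))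
    (hc : c = -p ^ 2 - 2 * p + 2 - s * Real.sqrt (F p)) :
    (∀ x ∈ convexHull ℝ
        ({![0, 0], ![p, 0], ![p, 1 - p], ![0, 1]} : Set (Fin 2 → ℝ)),
      0 < a * x 0 + b * x 1 + c) ∧
    (0 < c ∧ 0 < a * p + c ∧ 0 < a * p + b * (1 - p) + c ∧ 0 < b + c) := by
  have hp1 : p < 0.39 := lt_trans hpα hα1
  have hFp : 0 < F p := hFpos p hp0 hpα
  set t := Real.sqrt (F p) with htdef
  have ht0 : 0 ≤ t := Real.sqrt_nonneg _
  have htsq : t ^ 2 = F p := Real.sq_sqrt hFp.le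
  have hFpval : F p = p ^ 4 - 4 * p ^ 3 + 16 * p ^ 2 - 16 * p + 4 := hF p
  have h1 : t < 2 - 2 * p - p ^ 2 := by
    have hy : 0 < 2 - 2 * p - p ^ 2 := by nlinarith
    rw [Real.sqrt_lt' hy]
    nlinarith [sq_nonneg (p - 1)]
  have h2 : t < p ^ 2 - 2 * p + 2 := by
    have hy : 0 < p ^ 2 - 2 * p + 2 := by nlinarith [sq_nonneg (p - 1)]
    rw [Real.sqrt_lt' hy]
    nlinarith
  have hkey : 0 < c ∧ 0 < a * p + c ∧ 0 < a * p + b * (1 - p) + c ∧ 0 < b + c := by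
    rcases hs with hs | hs <;> subst hs <;> subst ha hb hc <;>
      refine ⟨by nlinarith, by nlinarith, by nlinarith, by nlinarith⟩
  refine ⟨?_, hkey⟩
  intro x hx
  have hlin : IsLinearMap ℝ (fun y : Fin 2 → ℝ => a * y 0 + b * y 1) := by
    constructor
    · intro u v
      simp only [Pi.add_apply]
      ring
    · intro r u
      simp only [Pi.smul_apply, smul_eq_mul]
      ring
  have hconv : Convex ℝ {y : Fin 2 → ℝ | -c < a * y 0 + b * y 1} :=
    convex_halfSpace_gt hlin (-c)
  have hsub : ({![0, 0], ![p, 0], ![p, 1 - p], ![0, 1]} : Set (Fin 2 → ℝ)) ⊆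
      {y : Fin 2 → ℝ | -c < a * y 0 + b * y 1} := by
    intro y hy
    simp only [Set.mem_insert_iff, Set.mem_singleton_iff] at hy
    rcases hy with rfl | rfl | rfl | rfl <;>
      simp only [Set.mem_setOf_eq, Matrix.cons_val_zero, Matrix.cons_val_one, Matrix.head_cons] <;>
      [skip; skip; skip; skip] <;> obtain ⟨h1, h2, h3, h4⟩ := hkey
    · linarith
    · linarith
    · linarith
    · linarith
  have := convexHull_min hsub hconv hx
  simp only [Set.mem_setOf_eq] at this
  linarith
end
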